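/- arXiv:1411.0222 — 2 statements merged into one kernel-verified Lean document; each statement's English description precedes it below -/
import Mathlib

section
/- Fix 0 < σ < 1 and define the ultrametric dist(c,d) = σ^{ord(c-d)} on formal power series. Then for any series c₁, c₂, d₁, d₂ over a finite alphabet, dist(c₁ ⧢ d₁, c₂ ⧢ d₂) ≤ max(σ^{ord(c₁)} · dist(d₁,d₂), σ^{ord(d₂)} · dist(c₁,c₂)). -/
/-- Shuffle product of formal power series (words to `ℝ`), via the left-quotient recursion. -/
noncomputable def shuffle {X : Type*} : (List X → ℝ) → (List X → ℝ) → List X → ℝ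
  | c, d, [] => c [] * d []
  | c, d, x :: w => shuffle (fun u => c (x :: u)) d w + shuffle c (fun u => d (x :: u)) w

/-- Order of a series: minimal word length in the support, `⊤` for the zero series. -/
noncomputable def ord {X : Type*} (c : List X → ℝ) : ℕ∞ :=
  sInf {n : ℕ∞ | ∃ w, c w ≠ 0 ∧ (w.length : ℕ∞) = n}

/-- `σ` raised to an extended-natural power, with `σ^⊤ = 0`. -/
noncomputable def upow (σ : ℝ) (n : ℕ∞) : ℝ :=
  if n = ⊤ then 0 else σ ^ n.toNat

/-- The ultrametric distance `dist(c,d) = σ^(ord (c-d))`. -/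
noncomputable def udist {X : Type*} (σ : ℝ) (c d : List X → ℝ) : ℝ :=
  upow σ (ord (c - d))

/-!
The difference `c₁ ⧢ d₁ - c₂ ⧢ d₂` splits by bilinearity as `c₁ ⧢ (d₁ - d₂) + (c₁ - c₂) ⧢ d₂`.
The order of a shuffle is at least the sum of the orders, by induction along the recursion
defining `⧢`, since a left quotient `x⁻¹c` loses at most one from the order of `c`; the order
of a sum is at least the minimum of the orders. Since `n ↦ σ^n` is antitone and turns sums into products,
this gives the bound.
-/

section Order

variable {X : Type*} {c d : List X → ℝ}

lemma ord_le_length {w : List X} (h : c w ≠ 0) : ord c ≤ w.length :=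
  sInf_le ⟨w, h, rfl⟩

lemma apply_eq_zero_of_length_lt_ord {w : List X} (h : (w.length : ℕ∞) < ord c) : c w = 0 :=
  by_contra fun hw => (ord_le_length hw).not_gt h

lemma le_ord_iff {n : ℕ∞} : n ≤ ord c ↔ ∀ w : List X, (w.length : ℕ∞) < n → c w = 0 :=
  ⟨fun h _ hw => apply_eq_zero_of_length_lt_ord (hw.trans_le h),
    fun h => le_sInf fun _ ⟨w, hw, hlen⟩ => hlen ▸ not_lt.1 (mt (h w) hw)⟩

lemma exists_length_eq_ord (h : ord c ≠ ⊤) : ∃ w, c w ≠ 0 ∧ (w.length : ℕ∞) = ord c := by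
  have hne : {n : ℕ∞ | ∃ w, c w ≠ 0 ∧ (w.length : ℕ∞) = n}.Nonempty :=
    Set.nonempty_iff_ne_empty.2 fun hempty => h (by rw [ord, hempty, sInf_empty])
  exact csInf_mem hne

lemma ord_le_ord_cons_add_one (x : X) : ord c ≤ ord (fun u => c (x :: u)) + 1 := by
  rcases eq_or_ne (ord fun u => c (x :: u)) ⊤ with htop | htop
  · simp [htop]
  obtain ⟨u, hu, hlen⟩ := exists_length_eq_ord htop
  calc ord c ≤ (x :: u).length := ord_le_length hu
    _ = ord (fun u => c (x :: u)) + 1 := by rw [← hlen]; push_cast [List.length_cons]; rfl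

lemma min_ord_le_ord_add : min (ord c) (ord d) ≤ ord (c + d) :=
  le_ord_iff.2 fun _ hw => by
    rw [Pi.add_apply, apply_eq_zero_of_length_lt_ord (hw.trans_le (min_le_left _ _)),
      apply_eq_zero_of_length_lt_ord (hw.trans_le (min_le_right _ _)), add_zero]

end Order

section Shuffle

variable {X : Type*}

lemma shuffle_apply_eq_zero_of_length_lt (w : List X) :
    ∀ c d : List X → ℝ, (w.length : ℕ∞) < ord c + ord d → shuffle c d w = 0 := by
  induction w with
  | nil =>
    intro c d h
    rcases eq_or_ne (ord c) 0 with hc | hc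
    · rw [shuffle, apply_eq_zero_of_length_lt_ord (c := d) (by simpa [hc] using h), mul_zero]
    · rw [shuffle, apply_eq_zero_of_length_lt_ord (c := c) (by simpa [pos_iff_ne_zero] using hc),
        zero_mul]
  | cons x w ih =>
    intro c d h
    have hlen : (w.length : ℕ∞) + 1 < ord c + ord d := by simpa using h
    rw [shuffle, ih, ih, add_zero]
    · refine (ENat.add_lt_add_iff_right ENat.one_ne_top).1 (hlen.trans_le ?_)
      rw [add_assoc]
      exact add_le_add le_rfl (ord_le_ord_cons_add_one x)
    · refine (ENat.add_lt_add_iff_right ENat.one_ne_top).1 (hlen.trans_le ?_)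
      rw [add_right_comm]
      exact add_le_add (ord_le_ord_cons_add_one x) le_rfl

lemma ord_add_ord_le_ord_shuffle (c d : List X → ℝ) : ord c + ord d ≤ ord (shuffle c d) :=
  le_ord_iff.2 fun w => shuffle_apply_eq_zero_of_length_lt w c d

lemma shuffle_sub_left (w : List X) :
    ∀ c₁ c₂ d : List X → ℝ, shuffle (c₁ - c₂) d w = shuffle c₁ d w - shuffle c₂ d w := by
  induction w with
  | nil => intro c₁ c₂ d; simp only [shuffle, Pi.sub_apply]; ring
  | cons x w ih =>
    intro c₁ c₂ d
    have h₁ := ih (fun u => c₁ (x :: u)) (fun u => c₂ (x :: u)) d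
    have h₂ := ih c₁ c₂ (fun u => d (x :: u))
    exact (congrArg₂ (· + ·) h₁ h₂).trans (by simp only [shuffle]; ring)

lemma shuffle_sub_right (w : List X) :
    ∀ c d₁ d₂ : List X → ℝ, shuffle c (d₁ - d₂) w = shuffle c d₁ w - shuffle c d₂ w := by
  induction w with
  | nil => intro c d₁ d₂; simp only [shuffle, Pi.sub_apply]; ring
  | cons x w ih =>
    intro c d₁ d₂
    have h₁ := ih (fun u => c (x :: u)) d₁ d₂
    have h₂ := ih c (fun u => d₁ (x :: u)) (fun u => d₂ (x :: u))
    exact (congrArg₂ (· + ·) h₁ h₂).trans (by simp only [shuffle]; ring)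

lemma shuffle_sub_shuffle (c₁ c₂ d₁ d₂ : List X → ℝ) :
    shuffle c₁ d₁ - shuffle c₂ d₂ = shuffle c₁ (d₁ - d₂) + shuffle (c₁ - c₂) d₂ := by
  funext w
  simp only [Pi.sub_apply, Pi.add_apply, shuffle_sub_left, shuffle_sub_right]
  ring

end Shuffle

section Upow

variable {σ : ℝ}

lemma upow_nonneg (hσ0 : 0 ≤ σ) (n : ℕ∞) : 0 ≤ upow σ n := by
  unfold upow
  split_ifs
  exacts [le_rfl, pow_nonneg hσ0 _]

lemma upow_antitone (hσ0 : 0 ≤ σ) (hσ1 : σ ≤ 1) : Antitone (upow σ) := by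
  intro m n h
  rcases eq_or_ne n ⊤ with rfl | hn
  · simpa [upow] using upow_nonneg hσ0 m
  have hm : m ≠ ⊤ := ne_top_of_le_ne_top hn h
  simp only [upow, if_neg hn, if_neg hm]
  exact pow_le_pow_of_le_one hσ0 hσ1 (ENat.toNat_le_toNat h hn)

lemma upow_add (σ : ℝ) (m n : ℕ∞) : upow σ (m + n) = upow σ m * upow σ n := by
  rcases eq_or_ne m ⊤ with rfl | hm
  · simp [upow]
  rcases eq_or_ne n ⊤ with rfl | hn
  · simp [upow]
  have hmn : m + n ≠ ⊤ := by simp [hm, hn]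
  rw [upow, upow, upow, if_neg hm, if_neg hn, if_neg hmn, ENat.toNat_add hm hn, pow_add]

end Upow

theorem udist_shuffle_le_general {X : Type*} (σ : ℝ) (hσ0 : 0 < σ) (hσ1 : σ < 1)
    (c₁ c₂ d₁ d₂ : List X → ℝ) :
    udist σ (shuffle c₁ d₁) (shuffle c₂ d₂) ≤
      max (upow σ (ord c₁) * udist σ d₁ d₂) (upow σ (ord d₂) * udist σ c₁ c₂) := by
  have hanti := upow_antitone hσ0.le hσ1.le
  have hord : min (ord c₁ + ord (d₁ - d₂)) (ord (c₁ - c₂) + ord d₂)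
      ≤ ord (shuffle c₁ d₁ - shuffle c₂ d₂) := by
    rw [shuffle_sub_shuffle]
    exact (min_le_min (ord_add_ord_le_ord_shuffle _ _) (ord_add_ord_le_ord_shuffle _ _)).trans
      min_ord_le_ord_add
  calc udist σ (shuffle c₁ d₁) (shuffle c₂ d₂)
      ≤ upow σ (min (ord c₁ + ord (d₁ - d₂)) (ord (c₁ - c₂) + ord d₂)) := hanti hord
    _ = max (upow σ (ord c₁) * udist σ d₁ d₂) (upow σ (ord d₂) * udist σ c₁ c₂) := by
      rw [hanti.map_min, upow_add, upow_add, mul_comm (upow σ (ord (c₁ - c₂)))]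
      rfl

theorem udist_shuffle_le {X : Type*} [Fintype X] (σ : ℝ) (hσ0 : 0 < σ) (hσ1 : σ < 1)
    (c₁ c₂ d₁ d₂ : List X → ℝ) :
    udist σ (shuffle c₁ d₁) (shuffle c₂ d₂) ≤
      max (upow σ (ord c₁) * udist σ d₁ d₂) (upow σ (ord d₂) * udist σ c₁ c₂) :=
  udist_shuffle_le_general σ hσ0 hσ1 c₁ c₂ d₁ d₂
end

section
/- If c and d are non-proper formal power series with the same constant term, then ord(c^{⧢-1} - d^{⧢-1}) = ord(c - d); equivalently, the shuffle inversion is an isometry on each set of non-proper series with a fixed constant term. -/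
/-- The series `1` (the empty word). -/
noncomputable def oneF {X : Type*} : List X → ℝ := fun w => match w with | [] => 1 | _ => 0

/-- Shuffle powers. -/
noncomputable def shufflePow {X : Type*} (c : List X → ℝ) : ℕ → List X → ℝ
  | 0 => oneF
  | n + 1 => shuffle c (shufflePow c n)

/-- Shuffle inverse of a non-proper series:
`c^{⧢-1} = (c,∅)⁻¹ · (c')^{⧢*}` where `c' = 1 - c/(c,∅)` and `(c')^{⧢*} = Σ_{k≥0} (c')^{⧢k}`. -/
noncomputable def shuffleInv {X : Type*} (c : List X → ℝ) : List X → ℝ :=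
  fun w => (c [])⁻¹ * ∑' k : ℕ, shufflePow (oneF - (c [])⁻¹ • c) k w

/-!
Write `a = c[]`, `c' = 1 - (c [])⁻¹ c` and `d' = 1 - (c [])⁻¹ d`, so that `c^{⧢-1} = (c [])⁻¹ Σ_k c'^{⧢k}` and
likewise for `d`. Shuffle is bilinear and `ord (f ⧢ g) ≥ ord f + ord g`; hence if `c` and `d`
agree below length `m`, the proper series `c'` and `d'` do too, and
`c'^{⧢(k+1)} - d'^{⧢(k+1)} = (c' - d') ⧢ c'^{⧢k} + d' ⧢ (c'^{⧢k} - d'^{⧢k})` vanishes below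
`m + k`. Up to length `m` only the linear term survives:
`c^{⧢-1} - d^{⧢-1} ≡ -a⁻² (c - d)`, and the two differences have the same order.
-/

section

variable {X : Type*}

def VanishesBelow (n : ℕ) (f : List X → ℝ) : Prop :=
  ∀ w : List X, w.length < n → f w = 0

namespace VanishesBelow

variable {m n : ℕ} {f g : List X → ℝ}

theorem mono (hf : VanishesBelow n f) (hmn : m ≤ n) : VanishesBelow m f :=
  fun w hw => hf w (by omega)

theorem add (hf : VanishesBelow n f) (hg : VanishesBelow n g) : VanishesBelow n (f + g) :=
  fun w hw => by simp [hf w hw, hg w hw]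

end VanishesBelow

theorem vanishesBelow_one_iff {f : List X → ℝ} : VanishesBelow 1 f ↔ f [] = 0 :=
  ⟨fun hf => hf [] Nat.one_pos,
    fun hf w hw => by rwa [List.length_eq_zero_iff.1 (Nat.lt_one_iff.1 hw)]⟩

theorem ord_eq_top_iff {f : List X → ℝ} : ord f = ⊤ ↔ f = 0 := by
  simp only [ord, sInf_eq_top, Set.mem_ofPred_eq, forall_exists_index, and_imp]
  refine ⟨fun h => funext fun w => by_contra fun hw => ENat.natCast_ne_top _ (h _ w hw rfl), ?_⟩
  rintro rfl n w hw
  exact absurd rfl hw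

theorem ord_eq_natCast_iff {f : List X → ℝ} {n : ℕ} :
    ord f = n ↔ VanishesBelow n f ∧ ∃ w : List X, w.length = n ∧ f w ≠ 0 := by
  constructor
  · intro h
    refine ⟨fun w hw => by_contra fun hfw => ?_, ?_⟩
    · have : ord f ≤ w.length := sInf_le ⟨w, hfw, rfl⟩
      rw [h] at this
      exact absurd (ENat.natCast_le_natCast.1 this) (by omega)
    · have hne : {n : ℕ∞ | ∃ w, f w ≠ 0 ∧ (w.length : ℕ∞) = n}.Nonempty := by
        by_contra hempty
        rw [Set.not_nonempty_iff_eq_empty] at hempty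
        rw [ord, hempty, sInf_empty] at h
        exact ENat.top_ne_natCast n h
      obtain ⟨w, hw, hlen⟩ := csInf_mem hne
      exact ⟨w, ENat.natCast_inj.1 (hlen.trans h), hw⟩
  · rintro ⟨hf, w, hw, hfw⟩
    refine le_antisymm (sInf_le ⟨w, hfw, by rw [hw]⟩) (le_sInf ?_)
    rintro _ ⟨v, hv, rfl⟩
    exact ENat.natCast_le_natCast.2 (not_lt.1 fun hlt => hv (hf v hlt))

theorem ord_eq_of_apply_eq_mul {f g : List X → ℝ} {n : ℕ} {r : ℝ} (hr : r ≠ 0)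
    (hg : ord g = n) (hfg : ∀ w : List X, w.length ≤ n → f w = r * g w) : ord f = n := by
  obtain ⟨hg0, w, hw, hgw⟩ := ord_eq_natCast_iff.1 hg
  refine ord_eq_natCast_iff.2 ⟨fun v hv => ?_, w, hw, ?_⟩
  · rw [hfg v hv.le, hg0 v hv, mul_zero]
  · rw [hfg w hw.le]
    exact mul_ne_zero hr hgw

@[simp]
theorem shuffle_nil (f g : List X → ℝ) : shuffle f g [] = f [] * g [] := by
  rw [shuffle]

@[simp]
theorem shuffle_cons (f g : List X → ℝ) (x : X) (w : List X) :
    shuffle f g (x :: w) =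
      shuffle (fun u => f (x :: u)) g w + shuffle f (fun u => g (x :: u)) w := by
  rw [shuffle]

theorem shuffle_sub_left_s4 (f g h : List X → ℝ) :
    shuffle (f - g) h = shuffle f h - shuffle g h := by
  funext w
  induction w generalizing f g h with
  | nil => simp only [shuffle_nil, Pi.sub_apply]; ring
  | cons x w ih =>
    have hquot : (fun u => (f - g) (x :: u)) = (fun u => f (x :: u)) - fun u => g (x :: u) := rfl
    rw [Pi.sub_apply, shuffle_cons, shuffle_cons, shuffle_cons, hquot, ih, ih]
    simp only [Pi.sub_apply]
    ring

theorem shuffle_sub_right_s4 (f g h : List X → ℝ) :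
    shuffle f (g - h) = shuffle f g - shuffle f h := by
  funext w
  induction w generalizing f g h with
  | nil => simp only [shuffle_nil, Pi.sub_apply]; ring
  | cons x w ih =>
    have hquot : (fun u => (g - h) (x :: u)) = (fun u => g (x :: u)) - fun u => h (x :: u) := rfl
    rw [Pi.sub_apply, shuffle_cons, shuffle_cons, shuffle_cons, hquot, ih, ih]
    simp only [Pi.sub_apply]
    ring

theorem shuffle_zero_right (f : List X → ℝ) : shuffle f 0 = 0 := by
  have h := shuffle_sub_right_s4 f 0 0
  rwa [sub_self, sub_self] at h

theorem shuffle_oneF_right (f : List X → ℝ) : shuffle f oneF = f := by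
  funext w
  induction w generalizing f with
  | nil => simp [oneF]
  | cons x w ih =>
    have hquot : (fun u => (oneF : List X → ℝ) (x :: u)) = 0 := rfl
    rw [shuffle_cons, ih, hquot, shuffle_zero_right, Pi.zero_apply, add_zero]

theorem VanishesBelow.shuffle {p q : ℕ} {f g : List X → ℝ} (hf : VanishesBelow p f)
    (hg : VanishesBelow q g) : VanishesBelow (p + q) (_root_.shuffle f g) := by
  intro w hw
  induction w generalizing p q f g with
  | nil =>
    rw [shuffle_nil]
    rcases Nat.eq_zero_or_pos p with rfl | hp
    · rw [hg [] (by simpa using hw), mul_zero]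
    · rw [hf [] hp, zero_mul]
  | cons x w ih =>
    rw [shuffle_cons,
      ih (p := p - 1) (q := q) (fun v hv => hf _ (by simp; omega)) hg (by simp at hw; omega),
      ih (p := p) (q := q - 1) hf (fun v hv => hg _ (by simp; omega)) (by simp at hw; omega),
      add_zero]

variable {f g : List X → ℝ}

theorem vanishesBelow_shufflePow (hf : f [] = 0) (k : ℕ) : VanishesBelow k (shufflePow f k) := by
  induction k with
  | zero => exact fun w hw => absurd hw (Nat.not_lt_zero _)
  | succ k ih => rw [shufflePow, Nat.add_comm]; exact (vanishesBelow_one_iff.2 hf).shuffle ih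

theorem shufflePow_succ_sub_shufflePow_succ (k : ℕ) :
    shufflePow f (k + 1) - shufflePow g (k + 1) =
      shuffle (f - g) (shufflePow f k) + shuffle g (shufflePow f k - shufflePow g k) := by
  rw [shufflePow, shufflePow, shuffle_sub_left_s4, shuffle_sub_right_s4]
  abel

theorem vanishesBelow_shufflePow_succ_sub {m : ℕ} (hf : f [] = 0) (hg : g [] = 0)
    (hfg : VanishesBelow m (f - g)) (k : ℕ) :
    VanishesBelow (m + k) (shufflePow f (k + 1) - shufflePow g (k + 1)) := by
  induction k with
  | zero => simpa only [shufflePow, shuffle_oneF_right, Nat.add_zero] using hfg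
  | succ k ih =>
    rw [shufflePow_succ_sub_shufflePow_succ]
    exact (hfg.shuffle (vanishesBelow_shufflePow hf (k + 1))).add
      (((vanishesBelow_one_iff.2 hg).shuffle ih).mono (by omega))

theorem one_sub_inv_smul_apply_nil {c : List X → ℝ} (hc : c [] ≠ 0) :
    ((oneF : List X → ℝ) - (c [])⁻¹ • c) [] = 0 := by
  rw [Pi.sub_apply, Pi.smul_apply, smul_eq_mul, inv_mul_cancel₀ hc]
  exact sub_self 1

theorem shuffleInv_apply_eq_sum {c : List X → ℝ} (hc : c [] ≠ 0) {w : List X} {n : ℕ}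
    (hn : w.length < n) :
    shuffleInv c w = (c [])⁻¹ * ∑ k ∈ Finset.range n, shufflePow (oneF - (c [])⁻¹ • c) k w := by
  rw [shuffleInv, tsum_eq_sum]
  intro k hk
  exact vanishesBelow_shufflePow (one_sub_inv_smul_apply_nil hc) k w
    (by rw [Finset.mem_range] at hk; omega)

theorem shuffleInv_sub_shuffleInv_apply {c d : List X → ℝ} {m : ℕ} (hc : c [] ≠ 0)
    (h : c [] = d []) (hcd : VanishesBelow m (c - d)) {w : List X} (hw : w.length ≤ m) :
    (shuffleInv c - shuffleInv d) w = -(c [])⁻¹ ^ 2 * (c - d) w := by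
  have hc' : ((oneF : List X → ℝ) - (c [])⁻¹ • c) [] = 0 := one_sub_inv_smul_apply_nil hc
  have hd' : ((oneF : List X → ℝ) - (c [])⁻¹ • d) [] = 0 := by
    rw [h]; exact one_sub_inv_smul_apply_nil (h ▸ hc)
  have hdiff : (oneF - (c [])⁻¹ • c) - (oneF - (c [])⁻¹ • d) = -(c [])⁻¹ • (c - d) := by
    funext v
    simp only [Pi.sub_apply, Pi.smul_apply, smul_eq_mul]
    ring
  have hcd' : VanishesBelow m ((oneF - (c [])⁻¹ • c) - (oneF - (c [])⁻¹ • d)) := fun v hv => by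
    rw [hdiff, Pi.smul_apply, hcd v hv, smul_zero]
  have hhigher (k : ℕ) : shufflePow (oneF - (c [])⁻¹ • c) (k + 2) w
      - shufflePow (oneF - (c [])⁻¹ • d) (k + 2) w = 0 :=
    vanishesBelow_shufflePow_succ_sub hc' hd' hcd' (k + 1) w (by omega)
  -- split off the terms `k = 0` and `k = 1`; all higher ones vanish at `w`
  rw [Pi.sub_apply, shuffleInv_apply_eq_sum hc (by omega : w.length < w.length + 1 + 1),
    shuffleInv_apply_eq_sum (h ▸ hc) (by omega : w.length < w.length + 1 + 1), ← h, ← mul_sub,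
    ← Finset.sum_sub_distrib, Finset.sum_range_succ', Finset.sum_range_succ',
    Finset.sum_eq_zero fun k _ => hhigher k]
  simp only [shufflePow, shuffle_oneF_right, sub_self, add_zero]
  rw [← Pi.sub_apply, hdiff]
  simp only [Pi.smul_apply, smul_eq_mul]
  ring

end

theorem ord_shuffleInv_sub_general {X : Type*} (c d : List X → ℝ)
    (hc : c [] ≠ 0) (h : c [] = d []) :
    ord (shuffleInv c - shuffleInv d) = ord (c - d) := by
  cases hm : ord (c - d) with
  | top =>
    rw [ord_eq_top_iff, sub_eq_zero] at hm
    rw [hm, sub_self, ord_eq_top_iff]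
  | coe m =>
    exact ord_eq_of_apply_eq_mul (neg_ne_zero.2 (pow_ne_zero 2 (inv_ne_zero hc))) hm
      fun w hw => shuffleInv_sub_shuffleInv_apply hc h (ord_eq_natCast_iff.1 hm).1 hw

/-- Shuffle inversion is an isometry on non-proper series with a fixed constant term. -/
theorem ord_shuffleInv_sub {X : Type*} [Fintype X] (c d : List X → ℝ)
    (hc : c [] ≠ 0) (hd : d [] ≠ 0) (h : c [] = d []) :
    ord (shuffleInv c - shuffleInv d) = ord (c - d) :=
  ord_shuffleInv_sub_general c d hc h
end
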